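/- The sequence n ↦ b a^{n−1} b a^{n−2} b ⋯ b a b (with value ε at n = 0 and b at n = 1) is not poly-uniform: there is no finite set A of functions ℕ → ℕ such that for all n, every maximal block of consecutive a's in the n-th word has length in {P(n) | P ∈ A}. Concretely, the set of maximal a-block lengths of the n-th word is {0, 1, …, n−1}, whose cardinality is unbounded in n. -/

import Mathlib

/-!
Cutting `s (n + 1) = b aⁿ s n` after its first block shows that the maximal `a`-blocks of
`s n` have exactly the lengths `0, 1, …, n - 1`: `n` distinct values. A finite set `A` can
produce at most `|A|` distinct values `P n`, so taking `n = |A| + 1` gives a contradiction.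
-/

/-- `β_c(u)`: the set of lengths of maximal blocks of consecutive `c`'s in `u`. -/
def maxBlocks {S : Type*} (c : S) (u : List S) : Set ℕ :=
  {k | ∃ x y : List S, u = x ++ List.replicate k c ++ y ∧
        x.getLast? ≠ some c ∧ y.head? ≠ some c}

/-- The sequence `n ↦ b a^{n-1} b a^{n-2} ⋯ b a b`, over `{a,b}` encoded as `Bool`
with `a = true`, `b = false`. -/
def seqBA : ℕ → List Bool :=
  fun n => ((List.range n).reverse.map (fun i => false :: List.replicate i true)).flatten

lemma eq_of_replicate_append_eq_replicate_append {S : Type*} {c : S} {k n : ℕ} {y w : List S}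
    (hy : y.head? ≠ some c) (hw : w.head? ≠ some c)
    (h : List.replicate k c ++ y = List.replicate n c ++ w) : k = n := by
  induction k generalizing n with
  | zero =>
    cases n with
    | zero => rfl
    | succ n =>
      rw [List.replicate_zero, List.nil_append] at h
      simp [h, List.replicate_succ] at hy
  | succ k ih =>
    cases n with
    | zero =>
      rw [List.replicate_zero, List.nil_append] at h
      simp [← h, List.replicate_succ] at hw
    | succ n =>
      simp only [List.replicate_succ, List.cons_append, List.cons.injEq, true_and] at h
      rw [ih h]

lemma maxBlocks_nil {S : Type*} (c : S) : maxBlocks c [] = {0} := by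
  ext k
  constructor
  · rintro ⟨x, y, h, -, -⟩
    have := congrArg List.length h
    simp only [List.length_nil, List.length_append, List.length_replicate] at this
    exact Set.mem_singleton_iff.mpr (by omega)
  · rintro rfl
    exact ⟨[], [], rfl, by simp, by simp⟩

lemma maxBlocks_cons_replicate_append {S : Type*} {c d : S} (hd : d ≠ c) (n : ℕ) {w : List S}
    (hw : w.head? ≠ some c) :
    maxBlocks c (d :: (List.replicate n c ++ w)) = insert 0 (insert n (maxBlocks c w)) := by
  ext k
  constructor
  · rintro ⟨_ | ⟨e, x⟩, y, h, hx, hy⟩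
    · left
      cases k with
      | zero => rfl
      | succ k =>
        simp only [List.nil_append, List.replicate_succ, List.cons_append, List.cons.injEq] at h
        exact absurd h.1 hd
    right
    simp only [List.cons_append, List.cons.injEq, List.append_assoc] at h
    obtain ⟨rfl, h⟩ := h
    rcases List.append_eq_append_iff.mp h with ⟨a, rfl, hwa⟩ | ⟨a, hna, hka⟩
    · right
      refine ⟨a, y, by rw [hwa, List.append_assoc], fun ha => hx ?_, hy⟩
      simp [List.getLast?_cons, List.getLast?_append, ha]
    · left
      obtain ⟨-, hxc, -⟩ := List.append_eq_replicate_iff.mp hna.symm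
      have hx0 : x = [] := by
        by_contra hne
        rw [hxc] at hx
        simp [List.getLast?_cons, List.getLast?_replicate, hne] at hx
      rw [hx0, List.nil_append] at hna
      rw [← hna] at hka
      exact eq_of_replicate_append_eq_replicate_append hy hw hka
  · have h0 : 0 ∈ maxBlocks c (d :: (List.replicate n c ++ w)) :=
      ⟨[], d :: (List.replicate n c ++ w), rfl, by simp, by simpa using hd⟩
    rintro (rfl | rfl | ⟨_ | ⟨e, x⟩, y, rfl, hx, hy⟩)
    · exact h0
    · exact ⟨[d], _, by simp, by simpa using hd, hw⟩
    · obtain rfl : k = 0 := by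
        cases k
        · rfl
        · simp [List.replicate_succ] at hw
      exact h0
    · refine ⟨d :: List.replicate n c ++ e :: x, y, by simp, ?_, hy⟩
      rwa [List.getLast?_append_of_ne_nil _ (List.cons_ne_nil e x)]

lemma seqBA_succ (n : ℕ) : seqBA (n + 1) = false :: (List.replicate n true ++ seqBA n) := by
  simp [seqBA, List.range_succ]

lemma head?_seqBA_ne_some_true (n : ℕ) : (seqBA n).head? ≠ some true := by
  cases n with
  | zero => simp [seqBA]
  | succ n => simp [seqBA_succ]

lemma maxBlocks_seqBA (n : ℕ) : maxBlocks true (seqBA n) = insert 0 (Set.Iio n) := by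
  induction n with
  | zero => simp [seqBA, maxBlocks_nil]
  | succ n ih =>
    rw [seqBA_succ, maxBlocks_cons_replicate_append Bool.false_ne_true n
      (head?_seqBA_ne_some_true n), ih]
    ext k
    simp only [Set.mem_insert_iff, Set.mem_Iio]
    omega

lemma maxBlocks_seqBA_of_pos {n : ℕ} (hn : 0 < n) : maxBlocks true (seqBA n) = Set.Iio n := by
  rw [maxBlocks_seqBA, Set.insert_eq_of_mem (Set.mem_Iio.mpr hn)]

def IsPolyUniform {S : Type*} (c : S) (s : ℕ → List S) : Prop :=
  ∃ A : Set (ℕ → ℕ), A.Finite ∧ ∀ n, ∀ k ∈ maxBlocks c (s n), ∃ P ∈ A, P n = k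

lemma IsPolyUniform.ncard_maxBlocks_le {S : Type*} {c : S} {s : ℕ → List S}
    (h : IsPolyUniform c s) : ∃ C, ∀ n, (maxBlocks c (s n)).ncard ≤ C := by
  obtain ⟨A, hA, hblocks⟩ := h
  refine ⟨A.ncard, fun n => ?_⟩
  calc (maxBlocks c (s n)).ncard ≤ ((fun P => P n) '' A).ncard :=
        Set.ncard_le_ncard (hblocks n) (hA.image _)
    _ ≤ A.ncard := Set.ncard_image_le hA

theorem seqBA_not_polyUniform :
    (∀ n : ℕ, 1 ≤ n → maxBlocks true (seqBA n) = {k : ℕ | k < n}) ∧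
    ¬ ∃ A : Set (ℕ → ℕ), A.Finite ∧
        ∀ n : ℕ, ∀ k ∈ maxBlocks true (seqBA n), ∃ P ∈ A, P n = k := by
  refine ⟨fun n hn => maxBlocks_seqBA_of_pos hn, fun hpoly => ?_⟩
  obtain ⟨C, hC⟩ := IsPolyUniform.ncard_maxBlocks_le hpoly
  have hcard := hC (C + 1)
  rw [maxBlocks_seqBA_of_pos C.succ_pos, Set.ncard_Iio_nat] at hcard
  omega
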